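/- arXiv:2408.05450 — 2 statements merged into one kernel-verified Lean document; each statement's English description precedes it below -/
import Mathlib

section
/- There exists a finite set Λ_u ⊂ S² ∩ Q³ of vectors k, each with an associated orthonormal basis (k, k₁, k₂) of R³, a radius ε_u > 0, and smooth positive functions γ_{(k)} : B_{ε_u}(Id) → R (where B_{ε_u}(Id) is the ball of radius ε_u around the identity in the space of 3×3 symmetric matrices) such that every symmetric matrix S ∈ B_{ε_u}(Id) admits the decomposition S = Σ_{k ∈ Λ_u} γ_{(k)}(S)² k₁ ⊗ k₁. -/
/-- The 3×3 identity matrix, as a function `Fin 3 → Fin 3 → ℝ` (with the sup norm). -/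
def idMat : Fin 3 → Fin 3 → ℝ := fun i j => if i = j then 1 else 0

noncomputable section FGL

/-- a row vector -/
def row3 (a b c : ℚ) : Fin 3 → ℝ :=
  fun i => if i.val = 0 then (a : ℝ) else if i.val = 1 then (b : ℝ) else (c : ℝ)

/-- coercion to Euclidean space -/
def toE (f : Fin 3 → ℝ) : EuclideanSpace ℝ (Fin 3) := (WithLp.equiv 2 (Fin 3 → ℝ)).symm f

@[simp] lemma toE_apply (f : Fin 3 → ℝ) (i : Fin 3) : toE f i = f i := rfl

/-- the rational k-directions -/
def Kv (m : Fin 9) : Fin 3 → ℝ :=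
  if m.val = 0 then row3 0 1 0 else
  if m.val = 1 then row3 0 0 1 else
  if m.val = 2 then row3 1 0 0 else
  if m.val = 3 then row3 (4/5) (-3/5) 0 else
  if m.val = 4 then row3 (4/5) (3/5) 0 else
  if m.val = 5 then row3 (4/5) 0 (-3/5) else
  if m.val = 6 then row3 (4/5) 0 (3/5) else
  if m.val = 7 then row3 0 (4/5) (-3/5) else
  row3 0 (4/5) (3/5)

/-- the k₁ vectors, whose squares span symmetric matrices -/
def Vv (m : Fin 9) : Fin 3 → ℝ :=
  if m.val = 0 then row3 1 0 0 else
  if m.val = 1 then row3 0 1 0 else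
  if m.val = 2 then row3 0 0 1 else
  if m.val = 3 then row3 (3/5) (4/5) 0 else
  if m.val = 4 then row3 (3/5) (-4/5) 0 else
  if m.val = 5 then row3 (3/5) 0 (4/5) else
  if m.val = 6 then row3 (3/5) 0 (-4/5) else
  if m.val = 7 then row3 0 (3/5) (4/5) else
  row3 0 (3/5) (-4/5)

/-- the k₂ vectors -/
def Wv (m : Fin 9) : Fin 3 → ℝ :=
  if m.val = 0 then row3 0 0 1 else
  if m.val = 1 then row3 1 0 0 else
  if m.val = 2 then row3 0 1 0 else
  if m.val = 3 then row3 0 0 1 else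
  if m.val = 4 then row3 0 0 1 else
  if m.val = 5 then row3 0 1 0 else
  if m.val = 6 then row3 0 1 0 else
  row3 1 0 0

/-- the affine coefficient functions -/
def coefF (m : Fin 9) (S : Fin 3 → Fin 3 → ℝ) : ℝ :=
  if m.val = 0 then S 0 0 - 18/125 else
  if m.val = 1 then S 1 1 - 1/5 else
  if m.val = 2 then S 2 2 - 32/125 else
  if m.val = 3 then 1/10 + 25/24 * S 0 1 else
  if m.val = 4 then 1/10 - 25/24 * S 0 1 else
  if m.val = 5 then 1/10 + 25/24 * S 0 2 else
  if m.val = 6 then 1/10 - 25/24 * S 0 2 else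
  if m.val = 7 then 1/10 + 25/24 * S 1 2 else
  1/10 - 25/24 * S 1 2

lemma Kv_inj : Function.Injective fun m => toE (Kv m) := by
  intro a b hab
  have h0 : Kv a 0 = Kv b 0 := congrFun (congrArg (WithLp.equiv 2 (Fin 3 → ℝ)) hab) 0
  have h1 : Kv a 1 = Kv b 1 := congrFun (congrArg (WithLp.equiv 2 (Fin 3 → ℝ)) hab) 1
  have h2 : Kv a 2 = Kv b 2 := congrFun (congrArg (WithLp.equiv 2 (Fin 3 → ℝ)) hab) 2
  fin_cases a <;> fin_cases b <;> first
    | rfl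
    | (exfalso; revert h0 h1 h2; norm_num [Kv, row3])

open Classical in
def k1f : EuclideanSpace ℝ (Fin 3) → EuclideanSpace ℝ (Fin 3) :=
  fun k => if h : ∃ m, toE (Kv m) = k then toE (Vv h.choose) else 0

open Classical in
def k2f : EuclideanSpace ℝ (Fin 3) → EuclideanSpace ℝ (Fin 3) :=
  fun k => if h : ∃ m, toE (Kv m) = k then toE (Wv h.choose) else 0

open Classical in
def gf : EuclideanSpace ℝ (Fin 3) → (Fin 3 → Fin 3 → ℝ) → ℝ :=
  fun k S => if h : ∃ m, toE (Kv m) = k then Real.sqrt (coefF h.choose S) else 0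

lemma k1f_eq (m : Fin 9) : k1f (toE (Kv m)) = toE (Vv m) := by
  have h : ∃ m', toE (Kv m') = toE (Kv m) := ⟨m, rfl⟩
  simp only [k1f, dif_pos h]
  exact congrArg (fun m => toE (Vv m)) (Kv_inj h.choose_spec)

lemma k2f_eq (m : Fin 9) : k2f (toE (Kv m)) = toE (Wv m) := by
  have h : ∃ m', toE (Kv m') = toE (Kv m) := ⟨m, rfl⟩
  simp only [k2f, dif_pos h]
  exact congrArg (fun m => toE (Wv m)) (Kv_inj h.choose_spec)

lemma gf_eq (m : Fin 9) (S : Fin 3 → Fin 3 → ℝ) :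
    gf (toE (Kv m)) S = Real.sqrt (coefF m S) := by
  have h : ∃ m', toE (Kv m') = toE (Kv m) := ⟨m, rfl⟩
  simp only [gf, dif_pos h]
  exact congrArg (fun m => Real.sqrt (coefF m S)) (Kv_inj h.choose_spec)

lemma ball_entries {S : Fin 3 → Fin 3 → ℝ} (hS : S ∈ Metric.ball idMat (1/20)) :
    ∀ i j, |S i j - idMat i j| < 1/20 := by
  intro i j
  have h1 := (dist_pi_lt_iff (by norm_num : (0:ℝ) < 1/20)).mp (Metric.mem_ball.mp hS) i
  have h2 := (dist_pi_lt_iff (by norm_num : (0:ℝ) < 1/20)).mp h1 j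
  rwa [Real.dist_eq] at h2

lemma coef_pos {S : Fin 3 → Fin 3 → ℝ} (hS : S ∈ Metric.ball idMat (1/20)) (m : Fin 9) :
    0 < coefF m S := by
  have h00 : |S 0 0 - 1| < 1/20 := by simpa [idMat] using ball_entries hS 0 0
  have h11 : |S 1 1 - 1| < 1/20 := by simpa [idMat] using ball_entries hS 1 1
  have h22 : |S 2 2 - 1| < 1/20 := by simpa [idMat] using ball_entries hS 2 2
  have h01 : |S 0 1| < 1/20 := by simpa [idMat] using ball_entries hS 0 1
  have h02 : |S 0 2| < 1/20 := by simpa [idMat] using ball_entries hS 0 2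
  have h12 : |S 1 2| < 1/20 := by simpa [idMat] using ball_entries hS 1 2
  rw [abs_lt] at h00 h11 h22 h01 h02 h12
  fin_cases m <;> simp only [coefF] <;> norm_num <;>
    linarith [h00.1, h00.2, h11.1, h11.2, h22.1, h22.2,
      h01.1, h01.2, h02.1, h02.2, h12.1, h12.2]

lemma coef_smooth (m : Fin 9) : ContDiff ℝ (⊤ : WithTop ℕ∞) (coefF m) := by
  have happ : ∀ i j : Fin 3, ContDiff ℝ (⊤ : WithTop ℕ∞) (fun S : Fin 3 → Fin 3 → ℝ => S i j) := by
    intro i j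
    exact (contDiff_pi.mp (contDiff_pi.mp contDiff_id i) j)
  fin_cases m <;> simp only [coefF] <;> norm_num <;>
    first
      | exact (happ _ _).sub contDiff_const
      | exact contDiff_const.add (contDiff_const.mul (happ _ _))
      | exact contDiff_const.sub (contDiff_const.mul (happ _ _))

end FGL

set_option maxHeartbeats 2000000 in
/-- First Geometric Lemma: there exist a finite set `Λ_u ⊂ S² ∩ ℚ³`, vectors
`k₁ k, k₂ k` making `(k, k₁ k, k₂ k)` an orthonormal basis of `ℝ³`, a radius `ε_u > 0` and
smooth positive functions `γ_{(k)}` on the ball `B_{ε_u}(Id)` such that every symmetric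
matrix `S` in that ball decomposes as `S = Σ_{k ∈ Λ_u} γ_{(k)}(S)² k₁ ⊗ k₁`. -/
theorem first_geometric_lemma :
    ∃ (Λu : Finset (EuclideanSpace ℝ (Fin 3)))
      (k₁ k₂ : EuclideanSpace ℝ (Fin 3) → EuclideanSpace ℝ (Fin 3))
      (εu : ℝ) (γ : EuclideanSpace ℝ (Fin 3) → (Fin 3 → Fin 3 → ℝ) → ℝ),
      0 < εu ∧
      (∀ k ∈ Λu, ‖k‖ = 1 ∧ (∀ i, ∃ q : ℚ, k i = (q : ℝ)) ∧
        Orthonormal ℝ ![k, k₁ k, k₂ k]) ∧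
      (∀ k ∈ Λu, ContDiffOn ℝ (⊤ : ℕ∞) (γ k) (Metric.ball idMat εu)) ∧
      (∀ S : Fin 3 → Fin 3 → ℝ, S ∈ Metric.ball idMat εu → (∀ i j, S i j = S j i) →
        (∀ k ∈ Λu, 0 < γ k S) ∧
        (∀ i j, S i j = ∑ k ∈ Λu, (γ k S) ^ 2 * (k₁ k) i * (k₁ k) j)) := by
  classical
  refine ⟨Finset.image (fun m => toE (Kv m)) Finset.univ, k1f, k2f, 1/20, gf,
    by norm_num, ?_, ?_, ?_⟩
  · rintro k hk
    obtain ⟨m, -, rfl⟩ := Finset.mem_image.mp hk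
    rw [k1f_eq, k2f_eq]
    refine ⟨?_, ?_, ?_⟩
    · rw [EuclideanSpace.norm_eq, Fin.sum_univ_three]
      fin_cases m <;> norm_num [Kv, row3, Real.sqrt_eq_one]
    · intro i
      fin_cases m <;> fin_cases i <;> exact ⟨_, rfl⟩
    · rw [orthonormal_iff_ite]
      intro i j
      fin_cases i <;> fin_cases j <;>
        simp only [PiLp.inner_apply, RCLike.inner_apply, conj_trivial,
          Fin.sum_univ_three, Matrix.cons_val_zero, Matrix.cons_val_one,
          Matrix.head_cons, Matrix.cons_val_two, Matrix.tail_cons, toE_apply,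
          starRingEnd_apply, star_trivial] <;>
        fin_cases m <;> norm_num [Kv, Vv, Wv, row3, Fin.ext_iff]
  · rintro k hk
    obtain ⟨m, -, rfl⟩ := Finset.mem_image.mp hk
    intro S hS
    have hrw : gf (toE (Kv m)) = fun S => Real.sqrt (coefF m S) := funext (gf_eq m)
    rw [hrw]
    exact (((coef_smooth m).contDiffAt.sqrt (ne_of_gt (coef_pos hS m))).contDiffWithinAt).of_le le_top
  · intro S hS hsym
    constructor
    · rintro k hk
      obtain ⟨m, -, rfl⟩ := Finset.mem_image.mp hk
      rw [gf_eq]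
      exact Real.sqrt_pos.mpr (coef_pos hS m)
    · intro i j
      rw [Finset.sum_image (fun a _ b _ h => Kv_inj h)]
      have hterm : ∀ m : Fin 9, (gf (toE (Kv m)) S) ^ 2 * (k1f (toE (Kv m))) i
          * (k1f (toE (Kv m))) j = coefF m S * Vv m i * Vv m j := by
        intro m
        rw [gf_eq, k1f_eq, Real.sq_sqrt (coef_pos hS m).le]
        rfl
      simp only [hterm]
      rw [show (Finset.univ : Finset (Fin 9)) = Finset.univ from rfl]
      simp only [Fin.sum_univ_succ, Fin.sum_univ_zero]
      have hfin : ∀ i : Fin 3, i = 0 ∨ i = 1 ∨ i = 2 := by decide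
      rcases hfin i with rfl | rfl | rfl <;> rcases hfin j with rfl | rfl | rfl <;>
        · norm_num [coefF, Vv, row3]
          linarith [hsym 0 1, hsym 0 2, hsym 1 2, hsym 1 0, hsym 2 0, hsym 2 1]
end

section
/- There exists a finite set Λ_B ⊂ S² ∩ Q³ of vectors k, each with an associated orthonormal basis (k, k₁, k₂) of R³, a radius ε_B > 0, and smooth positive functions γ_{(k)} : B_{ε_B}(0) → R (where B_{ε_B}(0) is the ball of radius ε_B around the zero matrix in the space of 3×3 skew-symmetric matrices) such that every skew-symmetric matrix A ∈ B_{ε_B}(0) admits the decomposition A = Σ_{k ∈ Λ_B} γ_{(k)}(A)² (k₂ ⊗ k₁ − k₁ ⊗ k₂). -/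
noncomputable section

private def ev3 (i : Fin 3) : EuclideanSpace ℝ (Fin 3) := EuclideanSpace.single i 1



set_option maxHeartbeats 2000000 in
/-- Second Geometric Lemma: there exist a finite set `Λ_B ⊂ S² ∩ ℚ³`, vectors
`k₁ k, k₂ k` making `(k, k₁ k, k₂ k)` an orthonormal basis of `ℝ³`, a radius `ε_B > 0` and
smooth positive functions `γ_{(k)}` on the ball `B_{ε_B}(0)` such that every skew-symmetric
matrix `A` in that ball decomposes as
`A = Σ_{k ∈ Λ_B} γ_{(k)}(A)² (k₂ ⊗ k₁ − k₁ ⊗ k₂)`. -/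
theorem second_geometric_lemma :
    ∃ (ΛB : Finset (EuclideanSpace ℝ (Fin 3)))
      (k₁ k₂ : EuclideanSpace ℝ (Fin 3) → EuclideanSpace ℝ (Fin 3))
      (εB : ℝ) (γ : EuclideanSpace ℝ (Fin 3) → (Fin 3 → Fin 3 → ℝ) → ℝ),
      0 < εB ∧
      (∀ k ∈ ΛB, ‖k‖ = 1 ∧ (∀ i, ∃ q : ℚ, k i = (q : ℝ)) ∧
        Orthonormal ℝ ![k, k₁ k, k₂ k]) ∧
      (∀ k ∈ ΛB, ContDiffOn ℝ (⊤ : ℕ∞) (γ k) (Metric.ball (0 : Fin 3 → Fin 3 → ℝ) εB)) ∧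
      (∀ A : Fin 3 → Fin 3 → ℝ, A ∈ Metric.ball (0 : Fin 3 → Fin 3 → ℝ) εB →
        (∀ i j, A i j = -A j i) →
        (∀ k ∈ ΛB, 0 < γ k A) ∧
        (∀ i j, A i j = ∑ k ∈ ΛB,
          (γ k A) ^ 2 * ((k₂ k) i * (k₁ k) j - (k₁ k) i * (k₂ k) j))) := by
  classical
  -- basic facts about ev3
  have hev : ∀ (a : Fin 3) (j : Fin 3), ev3 a j = if j = a then 1 else 0 := by
    intro a j; simp [ev3, EuclideanSpace.single_apply]
  have hnev : ∀ (a : Fin 3) (j : Fin 3), (-ev3 a) j = if j = a then -1 else 0 := by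
    intro a j; simp only [PiLp.neg_apply, hev]; split <;> norm_num
  have hdiff : ∀ (x y : EuclideanSpace ℝ (Fin 3)) (i : Fin 3), x i ≠ y i → x ≠ y :=
    fun x y i h hxy => h (by rw [hxy])
  have h01 : ev3 0 ≠ ev3 1 := hdiff _ _ 0 (by simp [hev])
  have h02 : ev3 0 ≠ ev3 2 := hdiff _ _ 0 (by simp [hev])
  have h12 : ev3 1 ≠ ev3 2 := hdiff _ _ 1 (by simp [hev])
  have hn : ∀ a b : Fin 3, ev3 a ≠ -ev3 b := by
    intro a b; exact hdiff _ _ a (by simp [hev, hnev]; split <;> norm_num)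
  have hn' : ∀ a b : Fin 3, -ev3 a ≠ ev3 b := fun a b h => hn b a h.symm
  have hn01 : -ev3 0 ≠ -ev3 1 := hdiff _ _ 0 (by simp [hnev])
  have hn02 : -ev3 0 ≠ -ev3 2 := hdiff _ _ 0 (by simp [hnev])
  have hn12 : -ev3 1 ≠ -ev3 2 := hdiff _ _ 1 (by simp [hnev])
  refine ⟨{ev3 0, ev3 1, ev3 2, -ev3 0, -ev3 1, -ev3 2},
    (fun k => if k = ev3 0 then ev3 1 else if k = ev3 1 then ev3 2 else if k = ev3 2 then ev3 0
      else if k = -ev3 0 then ev3 2 else if k = -ev3 1 then ev3 0 else ev3 1),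
    (fun k => if k = ev3 0 then ev3 2 else if k = ev3 1 then ev3 0 else if k = ev3 2 then ev3 1
      else if k = -ev3 0 then ev3 1 else if k = -ev3 1 then ev3 2 else ev3 0),
    1,
    (fun k A => Real.sqrt (1 + (A 2 1 * k 0 + A 0 2 * k 1 + A 1 0 * k 2) / 2)),
    one_pos, ?_, ?_, ?_⟩
  · -- orthonormality etc.
    intro k hk
    simp only [Finset.mem_insert, Finset.mem_singleton] at hk
    have ortho : ∀ a b c : Fin 3, a ≠ b → a ≠ c → b ≠ c →
        ∀ s : ℝ, s = 1 ∨ s = -1 →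
        Orthonormal ℝ ![s • ev3 a, ev3 b, ev3 c] := by
      intro a b c hab hac hbc s hs
      rw [orthonormal_iff_ite]
      intro i j
      have hs2 : s * s = 1 := by rcases hs with h | h <;> rw [h] <;> norm_num
      fin_cases i <;> fin_cases j <;>
        simp [ev3, real_inner_smul_left, real_inner_smul_right,
          EuclideanSpace.inner_single_left, EuclideanSpace.single_apply,
          hab, hac, hbc, hab.symm, hac.symm, hbc.symm, hs2] <;>
          (rcases hs with h | h <;> simp [h, EuclideanSpace.norm_single])
    have ortho1 : ∀ a b c : Fin 3, a ≠ b → a ≠ c → b ≠ c →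
        Orthonormal ℝ ![ev3 a, ev3 b, ev3 c] := by
      intro a b c hab hac hbc
      have := ortho a b c hab hac hbc 1 (Or.inl rfl)
      simpa using this
    have ortho2 : ∀ a b c : Fin 3, a ≠ b → a ≠ c → b ≠ c →
        Orthonormal ℝ ![-ev3 a, ev3 b, ev3 c] := by
      intro a b c hab hac hbc
      have := ortho a b c hab hac hbc (-1) (Or.inr rfl)
      simpa using this
    have hqpos : ∀ a : Fin 3, ∀ i, ∃ q : ℚ, ev3 a i = (q : ℝ) := by
      intro a i; rw [hev]; split
      · exact ⟨1, by norm_num⟩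
      · exact ⟨0, by norm_num⟩
    have hqneg : ∀ a : Fin 3, ∀ i, ∃ q : ℚ, (-ev3 a) i = (q : ℝ) := by
      intro a i; rw [hnev]; split
      · exact ⟨-1, by norm_num⟩
      · exact ⟨0, by norm_num⟩
    have hnrm : ∀ a : Fin 3, ‖ev3 a‖ = 1 := by
      intro a; rw [ev3, EuclideanSpace.norm_single]; norm_num
    have hnrm' : ∀ a : Fin 3, ‖-ev3 a‖ = 1 := by
      intro a; rw [norm_neg]; exact hnrm a
    rcases hk with h | h | h | h | h | h <;> subst h <;>
      simp only [h01, h02, h12, h01.symm, h02.symm, h12.symm, hn, hn', hn01, hn02, hn12,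
        hn01.symm, hn02.symm, hn12.symm, if_true, if_false, if_neg, if_pos, eq_self_iff_true,
        Ne, neg_inj, not_false_iff]
    · exact ⟨hnrm 0, hqpos 0, ortho1 0 1 2 (by decide) (by decide) (by decide)⟩
    · exact ⟨hnrm 1, hqpos 1, ortho1 1 2 0 (by decide) (by decide) (by decide)⟩
    · exact ⟨hnrm 2, hqpos 2, ortho1 2 0 1 (by decide) (by decide) (by decide)⟩
    · exact ⟨hnrm' 0, hqneg 0, ortho2 0 2 1 (by decide) (by decide) (by decide)⟩
    · exact ⟨hnrm' 1, hqneg 1, ortho2 1 0 2 (by decide) (by decide) (by decide)⟩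
    · exact ⟨hnrm' 2, hqneg 2, ortho2 2 1 0 (by decide) (by decide) (by decide)⟩
  · -- smoothness
    intro k hk
    simp only [Finset.mem_insert, Finset.mem_singleton] at hk
    have hbd : ∀ (A : Fin 3 → Fin 3 → ℝ) (i j : Fin 3),
        A ∈ Metric.ball (0 : Fin 3 → Fin 3 → ℝ) 1 → |A i j| < 1 := by
      intro A i j hA
      rw [Metric.mem_ball, dist_zero_right] at hA
      calc |A i j| = ‖A i j‖ := rfl
        _ ≤ ‖A i‖ := norm_le_pi_norm (A i) j
        _ ≤ ‖A‖ := norm_le_pi_norm A i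
        _ < 1 := hA
    have key : ∀ (i j : Fin 3) (s : ℝ), s = 1 ∨ s = -1 →
        ContDiffOn ℝ (⊤ : ℕ∞) (fun A : Fin 3 → Fin 3 → ℝ => Real.sqrt (1 + A i j * s / 2))
          (Metric.ball (0 : Fin 3 → Fin 3 → ℝ) 1) := by
      intro i j s hs
      apply ContDiffOn.sqrt
      · apply ContDiff.contDiffOn
        have h : ContDiff ℝ (⊤ : ℕ∞) (fun y : Fin 3 → Fin 3 → ℝ => y i j) := by fun_prop
        exact contDiff_const.add ((h.mul contDiff_const).div_const 2)
      · intro A hA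
        have h1 := hbd A i j hA
        have habs : |A i j * s| < 1 := by
          rcases hs with h | h <;> rw [h] <;> simpa [abs_neg] using h1
        have h2 := (abs_lt.mp habs).1
        nlinarith
    rcases hk with h | h | h | h | h | h <;> subst h <;>
      simp only [hev, hnev, Fin.reduceEq] <;> norm_num
    · simpa using key 2 1 1 (Or.inl rfl)
    · simpa using key 0 2 1 (Or.inl rfl)
    · simpa using key 1 0 1 (Or.inl rfl)
    · simpa using key 2 1 (-1) (Or.inr rfl)
    · simpa using key 0 2 (-1) (Or.inr rfl)
    · simpa using key 1 0 (-1) (Or.inr rfl)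
  · -- decomposition
    intro A hA hskew
    have hbd : ∀ (i j : Fin 3), |A i j| < 1 := by
      intro i j
      rw [Metric.mem_ball, dist_zero_right] at hA
      calc |A i j| = ‖A i j‖ := rfl
        _ ≤ ‖A i‖ := norm_le_pi_norm (A i) j
        _ ≤ ‖A‖ := norm_le_pi_norm A i
        _ < 1 := hA
    have b1 := abs_lt.mp (hbd 2 1)
    have b2 := abs_lt.mp (hbd 0 2)
    have b3 := abs_lt.mp (hbd 1 0)
    constructor
    · intro k hk
      simp only [Finset.mem_insert, Finset.mem_singleton] at hk
      rcases hk with h | h | h | h | h | h <;> subst h <;>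
        apply Real.sqrt_pos.mpr <;> simp only [hev, hnev, Fin.reduceEq] <;> norm_num <;> linarith
    · intro i j
      have m1 : ev3 0 ∉ ({ev3 1, ev3 2, -ev3 0, -ev3 1, -ev3 2} :
          Finset (EuclideanSpace ℝ (Fin 3))) := by
        simp [Finset.mem_insert, Finset.mem_singleton, h01, h02, hn]
      have m2 : ev3 1 ∉ ({ev3 2, -ev3 0, -ev3 1, -ev3 2} :
          Finset (EuclideanSpace ℝ (Fin 3))) := by
        simp [Finset.mem_insert, Finset.mem_singleton, h12, hn]
      have m3 : ev3 2 ∉ ({-ev3 0, -ev3 1, -ev3 2} :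
          Finset (EuclideanSpace ℝ (Fin 3))) := by
        simp [Finset.mem_insert, Finset.mem_singleton, hn]
      have m4 : -ev3 0 ∉ ({-ev3 1, -ev3 2} : Finset (EuclideanSpace ℝ (Fin 3))) := by
        simp [Finset.mem_insert, Finset.mem_singleton, hn01, hn02]
      have m5 : -ev3 1 ∉ ({-ev3 2} : Finset (EuclideanSpace ℝ (Fin 3))) := by
        simp [Finset.mem_singleton, hn12]
      rw [Finset.sum_insert m1, Finset.sum_insert m2, Finset.sum_insert m3,
        Finset.sum_insert m4, Finset.sum_insert m5, Finset.sum_singleton]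
      simp only [h01, h02, h12, h01.symm, h02.symm, h12.symm, hn, hn', hn01, hn02, hn12,
        hn01.symm, hn02.symm, hn12.symm, if_true, if_false, if_neg, if_pos, eq_self_iff_true,
        Ne, neg_inj, not_false_iff]
      simp only [hev, hnev, Fin.reduceEq]
      norm_num
      rw [Real.sq_sqrt (by linarith), Real.sq_sqrt (by linarith), Real.sq_sqrt (by linarith),
        Real.sq_sqrt (by linarith), Real.sq_sqrt (by linarith), Real.sq_sqrt (by linarith)]
      fin_cases i <;> fin_cases j <;> simp <;>
        linarith [hskew 0 0, hskew 1 1, hskew 2 2, hskew 0 1, hskew 0 2, hskew 1 2]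
end
end
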